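/- If G is a right-linear context-free grammar, then in any sequence of moves of the shift-reduce recognizer R(G) starting from an initial configuration, no shift move immediately follows a reduce move. -/

import Mathlib

/-!
Infrastructure for finite-state approximation of context-free grammars
(Pereira & Wright). We use Mathlib's `ContextFreeGrammar`.

A dotted rule `A → α · β` is represented as `(some A, α, β)`;
the auxiliary dotted rules `S' → · S` and `S' → S ·` are represented with
first component `none`.  States of the LR(0) characteristic machine `M(G)`
are sets of dotted rules (the determinization by the subset construction);
the transition function `next` is total, with the empty set `∅` playing the
role of "undefined", so genuine transitions are those with nonempty target.
-/

namespace LRApprox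

/-- Context-free grammar with nonterminals in an arbitrary universe, as in the
Mathlib of December 2024 (Mathlib's `ContextFreeGrammar` now forces `NT : Type`). -/
structure ContextFreeGrammar.{u₁, u₂} (T : Type u₂) where
  /-- Type of nonterminals. -/
  NT : Type u₁
  /-- Initial nonterminal. -/
  initial : NT
  /-- Rewrite rules. -/
  rules : Finset (ContextFreeRule T NT)

universe uN uT

variable {T : Type uT}

/-- A dotted rule `A → α · β`; `none` as first component stands for the
auxiliary start symbol `S'`. -/
abbrev DottedRule (g : ContextFreeGrammar.{uN} T) : Type _ :=
  Option g.NT × List (Symbol T g.NT) × List (Symbol T g.NT)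

/-- A state of the characteristic machine `M(G)`: a set of dotted rules. -/
abbrev LRState (g : ContextFreeGrammar.{uN} T) : Type _ := Set (DottedRule g)

/-- Closure of a set of dotted rules: whenever `A → α · B β` is present and
`B → γ` is a rule, add `B → · γ`. -/
inductive Closure (g : ContextFreeGrammar.{uN} T) (R : Set (DottedRule g)) :
    DottedRule g → Prop
  | base {d : DottedRule g} : d ∈ R → Closure g R d
  | step {A : Option g.NT} {α β : List (Symbol T g.NT)} {B : g.NT}
      (r : ContextFreeRule T g.NT) :
      Closure g R (A, α, Symbol.nonterminal B :: β) →
      r ∈ g.rules → r.input = B → Closure g R (some B, [], r.output)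

/-- The transition function `δ` of `M(G)`: shift the dot over `X` and take the
closure.  The empty set plays the role of "undefined". -/
def next (g : ContextFreeGrammar.{uN} T) (s : LRState g) (X : Symbol T g.NT) : LRState g :=
  {d | Closure g {d' | ∃ A α β, (A, α, X :: β) ∈ s ∧ d' = (A, α ++ [X], β)} d}

/-- The start state `s₀` of `M(G)`: the closure of `{S' → · S}`. -/
def start (g : ContextFreeGrammar.{uN} T) : LRState g :=
  {d | Closure g {(none, [], [Symbol.nonterminal g.initial])} d}

/-- The dotted rule `S' → S ·`. -/
def finalDR (g : ContextFreeGrammar.{uN} T) : DottedRule g :=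
  (none, [Symbol.nonterminal g.initial], [])

/-- A state is final iff it contains `S' → S ·`. -/
def IsFinal (g : ContextFreeGrammar.{uN} T) (s : LRState g) : Prop := finalDR g ∈ s

/-- Iterated transition function, extended to strings of symbols. -/
def nextStar (g : ContextFreeGrammar.{uN} T) (s : LRState g)
    (α : List (Symbol T g.NT)) : LRState g :=
  α.foldl (next g) s

/-- A stack of the shift-reduce recognizer: a sequence of (state, symbol) pairs. -/
abbrev Stack (g : ContextFreeGrammar.{uN} T) : Type _ :=
  List (LRState g × Symbol T g.NT)

/-- `Stacks g s σ` iff `σ = ⟨q₀,X₀⟩…⟨q_k,X_k⟩` with `q₀ = s₀`,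
`q_i = δ(q_{i-1},X_{i-1})` and `s = δ(q_k,X_k)`; in addition `Stacks s₀`
contains the empty sequence. -/
inductive Stacks (g : ContextFreeGrammar.{uN} T) : LRState g → Stack g → Prop
  | nil : Stacks g (start g) []
  | snoc {q : LRState g} {σ : Stack g} {X : Symbol T g.NT} :
      Stacks g q σ → next g q X ≠ ∅ → Stacks g (next g q X) (σ ++ [(q, X)])

/-- A configuration `⟨s, σ, w⟩` of the shift-reduce recognizer `R(G)`. -/
structure Cfg (g : ContextFreeGrammar.{uN} T) where
  state : LRState g
  stack : Stack g
  input : List T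

/-- A shift move of `R(G)`. -/
inductive ShiftStep (g : ContextFreeGrammar.{uN} T) : Cfg g → Cfg g → Prop
  | shift {s : LRState g} {σ : Stack g} {x : T} {w : List T} :
      next g s (Symbol.terminal x) ≠ ∅ →
      ShiftStep g ⟨s, σ, x :: w⟩
        ⟨next g s (Symbol.terminal x), σ ++ [(s, Symbol.terminal x)], w⟩

/-- A reduce move of `R(G)`. -/
inductive ReduceStep (g : ContextFreeGrammar.{uN} T) : Cfg g → Cfg g → Prop
  | empty {s : LRState g} {σ : Stack g} {w : List T} {A : g.NT} :
      (some A, ([] : List (Symbol T g.NT)), ([] : List (Symbol T g.NT))) ∈ s →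
      next g s (Symbol.nonterminal A) ≠ ∅ →
      ReduceStep g ⟨s, σ, w⟩
        ⟨next g s (Symbol.nonterminal A), σ ++ [(s, Symbol.nonterminal A)], w⟩
  | pop {s : LRState g} {σ τ : Stack g} {w : List T} {A : g.NT}
      {s₁ : LRState g} {X₁ : Symbol T g.NT} :
      (some A, ((s₁, X₁) :: τ).map Prod.snd, ([] : List (Symbol T g.NT))) ∈ s →
      next g s₁ (Symbol.nonterminal A) ≠ ∅ →
      ReduceStep g ⟨s, σ ++ (s₁, X₁) :: τ, w⟩
        ⟨next g s₁ (Symbol.nonterminal A), σ ++ [(s₁, Symbol.nonterminal A)], w⟩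

/-- A move of the shift-reduce recognizer `R(G)`. -/
def Step (g : ContextFreeGrammar.{uN} T) (c c' : Cfg g) : Prop :=
  ShiftStep g c c' ∨ ReduceStep g c c'

/-- `R(G)` accepts `w`: some sequence of moves leads from the initial
configuration `⟨s₀, ε, w⟩` to a final configuration `⟨s, ⟨s₀,S⟩, ε⟩`, `s ∈ F`. -/
def RAccepts (g : ContextFreeGrammar.{uN} T) (w : List T) : Prop :=
  ∃ s : LRState g, IsFinal g s ∧
    Relation.ReflTransGen (Step g) ⟨start g, [], w⟩
      ⟨s, [(start g, Symbol.nonterminal g.initial)], []⟩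

/-- A stack congruence on `R(G)`: a family of equivalence relations on
`Stacks(s)`, compatible with pushing. -/
def IsStackCongruence (g : ContextFreeGrammar.{uN} T)
    (E : LRState g → Stack g → Stack g → Prop) : Prop :=
  (∀ s σ σ', E s σ σ' → Stacks g s σ ∧ Stacks g s σ') ∧
  (∀ s σ, Stacks g s σ → E s σ σ) ∧
  (∀ s σ σ', E s σ σ' → E s σ' σ) ∧
  (∀ s σ₁ σ₂ σ₃, E s σ₁ σ₂ → E s σ₂ σ₃ → E s σ₁ σ₃) ∧
  (∀ s X σ σ', next g s X ≠ ∅ → E s σ σ' →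
    E (next g s X) (σ ++ [(s, X)]) (σ' ++ [(s, X)]))

/-- A state of the unfolded recognizer `R_≡`: a state of `M(G)` together with
an equivalence class of stacks (represented as a set of stacks). -/
abbrev UState (g : ContextFreeGrammar.{uN} T) : Type _ := LRState g × Set (Stack g)

/-- Transition function `δ_≡` of the unfolded recognizer:
`δ_≡(⟨s,[σ]⟩, X) = ⟨δ(s,X), [σ⟨s,X⟩]⟩`. -/
def uNext (g : ContextFreeGrammar.{uN} T) (E : LRState g → Stack g → Stack g → Prop)
    (p : UState g) (X : Symbol T g.NT) : UState g :=
  (next g p.1 X,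
   {τ | Stacks g (next g p.1 X) τ ∧ ∃ σ ∈ p.2, E (next g p.1 X) τ (σ ++ [(p.1, X)])})

/-- Start state `⟨s₀, [ε]⟩` of the unfolded recognizer. -/
def uStart (g : ContextFreeGrammar.{uN} T)
    (E : LRState g → Stack g → Stack g → Prop) : UState g :=
  (start g, {τ | Stacks g (start g) τ ∧ E (start g) τ []})

/-- Genuine states of the unfolded recognizer: pairs `⟨s, [σ]_s⟩` with
`σ ∈ Stacks(s)`. -/
def IsUState (g : ContextFreeGrammar.{uN} T)
    (E : LRState g → Stack g → Stack g → Prop) (p : UState g) : Prop :=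
  ∃ σ, Stacks g p.1 σ ∧ p.2 = {τ | Stacks g p.1 τ ∧ E p.1 τ σ}

/-- Iterated `δ_≡`, extended to strings of symbols. -/
def uNextStar (g : ContextFreeGrammar.{uN} T)
    (E : LRState g → Stack g → Stack g → Prop)
    (p : UState g) (α : List (Symbol T g.NT)) : UState g :=
  α.foldl (uNext g E) p

/-- A configuration of the unfolded recognizer `R_≡`. -/
structure UCfg (g : ContextFreeGrammar.{uN} T) where
  state : UState g
  stack : List (UState g × Symbol T g.NT)
  input : List T

/-- A shift move of the unfolded recognizer. -/
inductive UShiftStep (g : ContextFreeGrammar.{uN} T)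
    (E : LRState g → Stack g → Stack g → Prop) : UCfg g → UCfg g → Prop
  | shift {p : UState g} {σ : List (UState g × Symbol T g.NT)} {x : T} {w : List T} :
      next g p.1 (Symbol.terminal x) ≠ ∅ →
      UShiftStep g E ⟨p, σ, x :: w⟩
        ⟨uNext g E p (Symbol.terminal x), σ ++ [(p, Symbol.terminal x)], w⟩

/-- A reduce move of the unfolded recognizer. -/
inductive UReduceStep (g : ContextFreeGrammar.{uN} T)
    (E : LRState g → Stack g → Stack g → Prop) : UCfg g → UCfg g → Prop
  | empty {p : UState g} {σ : List (UState g × Symbol T g.NT)} {w : List T} {A : g.NT} :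
      (some A, ([] : List (Symbol T g.NT)), ([] : List (Symbol T g.NT))) ∈ p.1 →
      next g p.1 (Symbol.nonterminal A) ≠ ∅ →
      UReduceStep g E ⟨p, σ, w⟩
        ⟨uNext g E p (Symbol.nonterminal A), σ ++ [(p, Symbol.nonterminal A)], w⟩
  | pop {p : UState g} {σ τ : List (UState g × Symbol T g.NT)} {w : List T} {A : g.NT}
      {p₁ : UState g} {X₁ : Symbol T g.NT} :
      (some A, ((p₁, X₁) :: τ).map Prod.snd, ([] : List (Symbol T g.NT))) ∈ p.1 →
      next g p₁.1 (Symbol.nonterminal A) ≠ ∅ →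
      UReduceStep g E ⟨p, σ ++ (p₁, X₁) :: τ, w⟩
        ⟨uNext g E p₁ (Symbol.nonterminal A), σ ++ [(p₁, Symbol.nonterminal A)], w⟩

/-- A move of the unfolded recognizer `R_≡`. -/
def UStep (g : ContextFreeGrammar.{uN} T)
    (E : LRState g → Stack g → Stack g → Prop) (c c' : UCfg g) : Prop :=
  UShiftStep g E c c' ∨ UReduceStep g E c c'

/-- The unfolded recognizer `R_≡` accepts `w`. -/
def UAccepts (g : ContextFreeGrammar.{uN} T)
    (E : LRState g → Stack g → Stack g → Prop) (w : List T) : Prop :=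
  ∃ p : UState g, IsFinal g p.1 ∧
    Relation.ReflTransGen (UStep g E) ⟨uStart g E, [], w⟩
      ⟨p, [(uStart g E, Symbol.nonterminal g.initial)], []⟩

/-- `Pop(p)`: the unfolded states reachable from `p` by a reduction. -/
def PopSet (g : ContextFreeGrammar.{uN} T)
    (E : LRState g → Stack g → Stack g → Prop) (p : UState g) : Set (UState g) :=
  {p' | ∃ (A : g.NT) (α : List (Symbol T g.NT)) (p'' : UState g),
    IsUState g E p'' ∧
    (some A, α, ([] : List (Symbol T g.NT))) ∈ p.1 ∧
    (some A, ([] : List (Symbol T g.NT)), α) ∈ p''.1 ∧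
    uNextStar g E p'' α = p ∧
    next g p''.1 (Symbol.nonterminal A) ≠ ∅ ∧
    uNext g E p'' (Symbol.nonterminal A) = p'}

/-- Paths in the flattening `F_≡` of the unfolded recognizer: terminal
transitions follow `δ_≡` and reductions become ε-transitions. -/
inductive FPath (g : ContextFreeGrammar.{uN} T)
    (E : LRState g → Stack g → Stack g → Prop) : UState g → List T → UState g → Prop
  | refl (p : UState g) : FPath g E p [] p
  | shift {p : UState g} {x : T} {w : List T} {q : UState g} :
      next g p.1 (Symbol.terminal x) ≠ ∅ →
      FPath g E (uNext g E p (Symbol.terminal x)) w q → FPath g E p (x :: w) q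
  | eps {p p' : UState g} {w : List T} {q : UState g} :
      p' ∈ PopSet g E p → FPath g E p' w q → FPath g E p w q

/-- The flattening `F_≡` accepts `w`. -/
def FAccepts (g : ContextFreeGrammar.{uN} T)
    (E : LRState g → Stack g → Stack g → Prop) (w : List T) : Prop :=
  ∃ q : UState g, IsFinal g q.1 ∧ FPath g E (uStart g E) w q

/-- A stack `⟨s₁,X₁⟩…⟨s_k,X_k⟩` is a loop if `δ(s_k,X_k) = s₁`. -/
def IsLoop (g : ContextFreeGrammar.{uN} T) (τ : Stack g) : Prop :=
  ∃ p q : LRState g × Symbol T g.NT,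
    τ.head? = some p ∧ τ.getLast? = some q ∧ next g q.1 q.2 = p.1

/-- A loop is minimal if no proper prefix of it is a loop. -/
def IsMinimalLoop (g : ContextFreeGrammar.{uN} T) (τ : Stack g) : Prop :=
  IsLoop g τ ∧ ∀ τ' : Stack g, τ' <+: τ → τ' ≠ τ → ¬ IsLoop g τ'

/-- A stack is collapsible if it contains a loop as a contiguous segment. -/
def Collapsible (g : ContextFreeGrammar.{uN} T) (σ : Stack g) : Prop :=
  ∃ ρ τ υ : Stack g, σ = ρ ++ τ ++ υ ∧ IsLoop g τ

/-- `σ` immediately collapses to `σ'`: remove the earliest minimal loop. -/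
def ImmediatelyCollapses (g : ContextFreeGrammar.{uN} T) (σ σ' : Stack g) : Prop :=
  ∃ ρ τ υ : Stack g, σ = ρ ++ τ ++ υ ∧ σ' = ρ ++ υ ∧ IsMinimalLoop g τ ∧
    ¬ ∃ ρ' τ' υ' : Stack g, σ = ρ' ++ τ' ++ υ' ∧ ρ' <+: ρ ∧ ρ' ≠ ρ ∧ IsLoop g τ'

/-- `σ` collapses to `σ'` by finitely many immediate collapses. -/
def Collapses (g : ContextFreeGrammar.{uN} T) : Stack g → Stack g → Prop :=
  Relation.ReflTransGen (ImmediatelyCollapses g)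

/-- Two stacks are collapsing-equivalent if they collapse to the same
uncollapsible stack. -/
def CollEquiv (g : ContextFreeGrammar.{uN} T) (σ σ' : Stack g) : Prop :=
  ∃ τ : Stack g, ¬ Collapsible g τ ∧ Collapses g σ τ ∧ Collapses g σ' τ

/-- The collapsing congruence: the restriction of collapsing equivalence to
the sets `Stacks(s)`. -/
def CollCong (g : ContextFreeGrammar.{uN} T) (s : LRState g) (σ σ' : Stack g) : Prop :=
  Stacks g s σ ∧ Stacks g s σ' ∧ CollEquiv g σ σ'

/-- A CFG is left-linear if every rule has the form `A → Bβ` or `A → β`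
with `β` a string of terminals. -/
def LeftLinear (g : ContextFreeGrammar.{uN} T) : Prop :=
  ∀ r ∈ g.rules, (∃ β : List T, r.output = β.map Symbol.terminal) ∨
    (∃ (B : g.NT) (β : List T), r.output = Symbol.nonterminal B :: β.map Symbol.terminal)

/-- A CFG is right-linear if every rule has the form `A → βB` or `A → β`
with `β` a string of terminals. -/
def RightLinear (g : ContextFreeGrammar.{uN} T) : Prop :=
  ∀ r ∈ g.rules, (∃ β : List T, r.output = β.map Symbol.terminal) ∨
    (∃ (B : g.NT) (β : List T), r.output = β.map Symbol.terminal ++ [Symbol.nonterminal B])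

/-- Reachable (genuine) states of `M(G)`. -/
def ReachableState (g : ContextFreeGrammar.{uN} T) (s : LRState g) : Prop :=
  s ≠ ∅ ∧ ∃ α : List (Symbol T g.NT), nextStar g (start g) α = s

/-!
In a right-linear grammar a nonterminal can only be the last symbol of a rule, so every dotted
rule `A → α · B β` with `B` a nonterminal has `β = ε`. Hence `δ(s, B)` consists of completed
dotted rules, its closure adds nothing, and no transition at all leaves it. A reduce move by a
rule for `B` enters such a state `δ(s', B)`, so a shift cannot follow. This needs `s'` to contain
only genuine dotted rules of `G`, which holds for every state recorded in a reachable
configuration.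
-/

variable {g : ContextFreeGrammar.{uN} T}

theorem eq_nil_of_append_nonterminal_cons_eq_map_terminal_append {N : Type*}
    {l₁ l₂ : List (Symbol T N)} {A : N} {l : List T} {y : Symbol T N}
    (h : l₁ ++ Symbol.nonterminal A :: l₂ = l.map Symbol.terminal ++ [y]) : l₂ = [] := by
  obtain rfl | ⟨l₂, z, rfl⟩ := List.eq_nil_or_concat' l₂
  · rfl
  · have h' : l₁ ++ Symbol.nonterminal A :: l₂ ++ [z] = l.map Symbol.terminal ++ [y] := by
      simpa using h
    have hinit := (List.append_inj' h' rfl).1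
    have : Symbol.nonterminal A ∈ l.map Symbol.terminal := hinit ▸ by simp
    simp at this

variable (g) in
/-- The dotted rules of `G` and of `S' → S`, among all triples of type `DottedRule g`. -/
def IsItem : DottedRule g → Prop
  | (none, α, β) => α ++ β = [Symbol.nonterminal g.initial]
  | (some A, α, β) => ∃ r ∈ g.rules, r.input = A ∧ α ++ β = r.output

theorem IsItem.advance {A : Option g.NT} {α β : List (Symbol T g.NT)} {X : Symbol T g.NT}
    (h : IsItem g (A, α, X :: β)) : IsItem g (A, α ++ [X], β) := by
  have hshift : α ++ [X] ++ β = α ++ X :: β := by simp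
  cases A with
  | none => exact hshift.trans h
  | some C =>
    obtain ⟨r, hr, hin, hout⟩ := h
    exact ⟨r, hr, hin, hshift.trans hout⟩

theorem RightLinear.eq_nil_of_isItem (hg : RightLinear g) {A : Option g.NT}
    {α β : List (Symbol T g.NT)} {B : g.NT} (h : IsItem g (A, α, Symbol.nonterminal B :: β)) :
    β = [] := by
  cases A with
  | none => exact eq_nil_of_append_nonterminal_cons_eq_map_terminal_append (l := []) h
  | some C =>
    obtain ⟨r, hr, -, hout⟩ := h
    rcases hg r hr with ⟨l, hl⟩ | ⟨D, l, hl⟩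
    · have : Symbol.nonterminal B ∈ l.map Symbol.terminal := hl ▸ hout ▸ by simp
      simp at this
    · exact eq_nil_of_append_nonterminal_cons_eq_map_terminal_append (hout.trans hl)

theorem Closure.isItem {R : Set (DottedRule g)} (hR : ∀ d ∈ R, IsItem g d) {d : DottedRule g}
    (h : Closure g R d) : IsItem g d := by
  induction h with
  | base hd => exact hR _ hd
  | step r _ hr hin _ => exact ⟨r, hr, hin, rfl⟩

theorem Closure.mem_of_forall_complete {R : Set (DottedRule g)} (hR : ∀ d ∈ R, d.2.2 = [])
    {d : DottedRule g} (h : Closure g R d) : d ∈ R := by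
  induction h with
  | base hd => exact hd
  | step _ _ _ _ ih => exact absurd (hR _ ih) (List.cons_ne_nil _ _)

theorem isItem_of_mem_start {d : DottedRule g} (h : d ∈ start g) : IsItem g d :=
  Closure.isItem (by rintro _ rfl; rfl) h

theorem isItem_of_mem_next {s : LRState g} (hs : ∀ d ∈ s, IsItem g d) {X : Symbol T g.NT}
    {d : DottedRule g} (h : d ∈ next g s X) : IsItem g d :=
  Closure.isItem (by rintro _ ⟨A, α, β, hmem, rfl⟩; exact (hs _ hmem).advance) h

theorem next_eq_empty_of_forall_complete {s : LRState g} (hs : ∀ d ∈ s, d.2.2 = [])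
    (X : Symbol T g.NT) : next g s X = ∅ := by
  have hkernel : ∀ d ∈ {d' | ∃ A α β, (A, α, X :: β) ∈ s ∧ d' = (A, α ++ [X], β)}, False := by
    rintro _ ⟨A, α, β, hmem, rfl⟩
    exact List.cons_ne_nil _ _ (hs _ hmem)
  exact Set.eq_empty_of_forall_notMem fun d hd =>
    hkernel d (Closure.mem_of_forall_complete (fun d hd => (hkernel d hd).elim) hd)

theorem RightLinear.complete_of_mem_next_nonterminal (hg : RightLinear g) {s : LRState g}
    (hs : ∀ d ∈ s, IsItem g d) {B : g.NT} {d : DottedRule g}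
    (h : d ∈ next g s (Symbol.nonterminal B)) : d.2.2 = [] := by
  have hkernel : ∀ d ∈ {d' | ∃ A α β, (A, α, Symbol.nonterminal B :: β) ∈ s ∧
      d' = (A, α ++ [Symbol.nonterminal B], β)}, d.2.2 = [] := by
    rintro _ ⟨A, α, β, hmem, rfl⟩
    exact hg.eq_nil_of_isItem (hs _ hmem)
  exact hkernel d (Closure.mem_of_forall_complete hkernel h)

theorem RightLinear.next_next_terminal_eq_empty (hg : RightLinear g) {s : LRState g}
    (hs : ∀ d ∈ s, IsItem g d) (B : g.NT) (x : T) :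
    next g (next g s (Symbol.nonterminal B)) (Symbol.terminal x) = ∅ :=
  next_eq_empty_of_forall_complete (fun _ => hg.complete_of_mem_next_nonterminal hs) _

def Cfg.states (c : Cfg g) : List (LRState g) := c.state :: c.stack.map Prod.fst

def Cfg.IsValid (c : Cfg g) : Prop := ∀ s ∈ c.states, ∀ d ∈ s, IsItem g d

theorem Cfg.IsValid.push {c : Cfg g} (hc : c.IsValid) {t : LRState g} (ht : t ∈ c.states)
    {σ : Stack g} (hσ : ∀ p ∈ σ, p ∈ c.stack) (X Y : Symbol T g.NT) (w : List T) :
    Cfg.IsValid ⟨next g t X, σ ++ [(t, Y)], w⟩ := by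
  intro u hu
  simp only [Cfg.states, List.map_append, List.map_cons, List.map_nil, List.mem_cons,
    List.mem_append] at hu
  rcases hu with rfl | hu | rfl | hu
  · exact fun _ => isItem_of_mem_next (hc t ht)
  · obtain ⟨p, hp, rfl⟩ := List.mem_map.1 hu
    exact hc _ (List.mem_cons_of_mem _ (List.mem_map_of_mem (hσ p hp)))
  · exact hc _ ht
  · simp at hu

theorem Step.isValid {c c' : Cfg g} (h : Step g c c') (hc : c.IsValid) : c'.IsValid := by
  rcases h with h | h
  · cases h with
    | shift => exact hc.push List.mem_cons_self (fun _ => id) _ _ _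
  · cases h with
    | empty => exact hc.push List.mem_cons_self (fun _ => id) _ _ _
    | pop => exact hc.push (by simp [Cfg.states]) (by simp +contextual) _ _ _

theorem isValid_of_reachable {w : List T} {c : Cfg g}
    (h : Relation.ReflTransGen (Step g) ⟨start g, [], w⟩ c) : c.IsValid := by
  induction h with
  | refl =>
    intro s hs d hd
    obtain rfl : s = start g := by simpa [Cfg.states] using hs
    exact isItem_of_mem_start hd
  | tail _ hstep ih => exact hstep.isValid ih

theorem ReduceStep.exists_state_eq_next {c c' : Cfg g} (h : ReduceStep g c c') :
    ∃ s ∈ c.states, ∃ B, c'.state = next g s (Symbol.nonterminal B) := by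
  cases h with
  | empty => exact ⟨_, List.mem_cons_self .., _, rfl⟩
  | pop => exact ⟨_, by simp [Cfg.states], _, rfl⟩

theorem ShiftStep.exists_next_ne_empty {c c' : Cfg g} (h : ShiftStep g c c') :
    ∃ x, next g c.state (Symbol.terminal x) ≠ ∅ := by
  cases h
  exact ⟨_, ‹_›⟩

end LRApprox

open LRApprox

/-- In a right-linear CFG, in any sequence of moves of the
shift-reduce recognizer `R(G)` starting from an initial configuration, no
shift move immediately follows a reduce move. -/
theorem right_linear_no_shift_after_reduce {T : Type*} (g : LRApprox.ContextFreeGrammar T)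
    (hg : RightLinear g) :
    ∀ (w : List T) (c c' c'' : Cfg g),
      Relation.ReflTransGen (Step g) ⟨start g, [], w⟩ c →
      ReduceStep g c c' → ¬ ShiftStep g c' c'' := by
  intro w c c' c'' hreach hreduce hshift
  obtain ⟨s, hs, B, hstate⟩ := hreduce.exists_state_eq_next
  obtain ⟨x, hx⟩ := hshift.exists_next_ne_empty
  rw [hstate] at hx
  exact hx (hg.next_next_terminal_eq_empty (isValid_of_reachable hreach s hs) B x)
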